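/- For all complex numbers a, b, real q with 2 < q < 4, and t ∈ [0,1], the bound | |a+t(b−a)|^{q−4}·conj((a+t(b−a))²) − |a|^{q−4}·conj(a²) | ≤ 2·(|a|^{q/2−1} + |b−a|^{q/2−1})·|b−a|^{q/2−1} holds. -/

import Mathlib

/-!
Put `β = q / 2 - 1 ∈ (0, 1)` and `f z = |z| ^ (β - 1) z`; up to a complex conjugation the
left-hand side is `|f (w ^ 2) - f (a ^ 2)|` with `w = a + t (b - a)`. The map `f` is `β`-Hölder with constant
`2 ^ (1 - β)`: writing `⟪x, y⟫ = (2 l - 1) |x| |y|`, both `|f x - f y| ^ 2` and `|x - y| ^ 2` are the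
same convex combination, with weights `l` and `1 - l`, of their values at `y = ± |y| x / |x|`, where
the bound follows from subadditivity and concavity of `s ↦ s ^ β`. Finally
`|w ^ 2 - a ^ 2| ≤ |b - a| (2 |a| + |b - a|)`, and subadditivity of `s ↦ s ^ β` once more splits
the power of this product into the two terms of the right-hand side.
-/

namespace Real

variable {p : ℝ}

lemma abs_rpow_sub_rpow_le {x y : ℝ} (hx : 0 ≤ x) (hy : 0 ≤ y) (hp : 0 ≤ p) (hp1 : p ≤ 1) :
    |x ^ p - y ^ p| ≤ |x - y| ^ p := by
  wlog hyx : y ≤ x generalizing x y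
  · rw [abs_sub_comm, abs_sub_comm x]
    exact this hy hx (le_of_not_ge hyx)
  have hsub : x ^ p ≤ (x - y) ^ p + y ^ p := by
    simpa using rpow_add_le_add_rpow (sub_nonneg.2 hyx) hy hp hp1
  rw [abs_of_nonneg (sub_nonneg.2 (rpow_le_rpow hy hyx hp)), abs_of_nonneg (sub_nonneg.2 hyx)]
  linarith

lemma rpow_add_rpow_le_two_rpow_mul {x y : ℝ} (hx : 0 ≤ x) (hy : 0 ≤ y) (hp : 0 ≤ p)
    (hp1 : p ≤ 1) : x ^ p + y ^ p ≤ 2 ^ (1 - p) * (x + y) ^ p := by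
  have hmid := (concaveOn_rpow hp hp1).2 (Set.mem_Ici.2 hx) (Set.mem_Ici.2 hy)
    (by norm_num : (0 : ℝ) ≤ 1 / 2) (by norm_num : (0 : ℝ) ≤ 1 / 2) (by norm_num)
  have hhalf : (1 / 2 * x + 1 / 2 * y : ℝ) ^ p = (1 / 2) ^ p * (x + y) ^ p := by
    rw [← mul_rpow (by norm_num) (by positivity)]
    ring_nf
  have htwo : (2 : ℝ) ^ (1 - p) = 2 * (1 / 2) ^ p := by
    rw [rpow_sub two_pos, rpow_one, div_rpow zero_le_one zero_le_two, one_rpow]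
    ring
  simp only [smul_eq_mul, hhalf] at hmid
  rw [htwo]
  linarith

lemma rpow_eq_rpow_sub_one_mul {x : ℝ} (hx : 0 ≤ x) (hp : p ≠ 0) : x ^ p = x ^ (p - 1) * x := by
  simpa using rpow_add_one' hx (y := p - 1) (by simpa using hp)

lemma interpolate_sq_rpow_le {r ρ l : ℝ} (hr : 0 ≤ r) (hρ : 0 ≤ ρ) (hp : 0 ≤ p) (hp1 : p ≤ 1)
    (hl0 : 0 ≤ l) (hl1 : l ≤ 1) :
    l * (r ^ p - ρ ^ p) ^ 2 + (1 - l) * (r ^ p + ρ ^ p) ^ 2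
      ≤ (2 ^ (1 - p)) ^ 2 * (l * (r - ρ) ^ 2 + (1 - l) * (r + ρ) ^ 2) ^ p := by
  have hC : 1 ≤ (2 ^ (1 - p) : ℝ) ^ 2 := one_le_pow₀ (one_le_rpow one_le_two (by linarith))
  have hdiff : (r ^ p - ρ ^ p) ^ 2 ≤ (2 ^ (1 - p)) ^ 2 * ((r - ρ) ^ 2) ^ p := calc
    (r ^ p - ρ ^ p) ^ 2 = |r ^ p - ρ ^ p| ^ 2 := (sq_abs _).symm
    _ ≤ (|r - ρ| ^ p) ^ 2 := by gcongr; exact abs_rpow_sub_rpow_le hr hρ hp hp1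
    _ = ((r - ρ) ^ 2) ^ p := by rw [rpow_pow_comm (abs_nonneg _), sq_abs]
    _ ≤ _ := le_mul_of_one_le_left (by positivity) hC
  have hsum : (r ^ p + ρ ^ p) ^ 2 ≤ (2 ^ (1 - p)) ^ 2 * ((r + ρ) ^ 2) ^ p := calc
    (r ^ p + ρ ^ p) ^ 2 ≤ (2 ^ (1 - p) * (r + ρ) ^ p) ^ 2 := by
      gcongr; exact rpow_add_rpow_le_two_rpow_mul hr hρ hp hp1
    _ = _ := by rw [mul_pow, rpow_pow_comm (add_nonneg hr hρ)]
  have hconc := (concaveOn_rpow hp hp1).2 (Set.mem_Ici.2 (sq_nonneg (r - ρ)))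
    (Set.mem_Ici.2 (sq_nonneg (r + ρ))) hl0 (sub_nonneg.2 hl1) (add_sub_cancel l 1)
  simp only [smul_eq_mul] at hconc
  calc l * (r ^ p - ρ ^ p) ^ 2 + (1 - l) * (r ^ p + ρ ^ p) ^ 2
      ≤ l * ((2 ^ (1 - p)) ^ 2 * ((r - ρ) ^ 2) ^ p)
        + (1 - l) * ((2 ^ (1 - p)) ^ 2 * ((r + ρ) ^ 2) ^ p) := by
        gcongr
    _ = (2 ^ (1 - p)) ^ 2 * (l * ((r - ρ) ^ 2) ^ p + (1 - l) * ((r + ρ) ^ 2) ^ p) := by ring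
    _ ≤ _ := mul_le_mul_of_nonneg_left hconc (by positivity)

lemma two_rpow_one_sub_mul_rpow_le {A h β : ℝ} (hA : 0 ≤ A) (hh : 0 ≤ h) (hβ0 : 0 ≤ β)
    (hβ1 : β ≤ 1) : 2 ^ (1 - β) * (h * (2 * A + h)) ^ β ≤ 2 * (A ^ β + h ^ β) * h ^ β := by
  have htwo : (2 : ℝ) ^ (1 - β) * 2 ^ β = 2 := by
    rw [← rpow_add two_pos, sub_add_cancel, rpow_one]
  have hle : (2 : ℝ) ^ (1 - β) ≤ 2 :=
    (rpow_le_rpow_of_exponent_le one_le_two (by linarith)).trans_eq (rpow_one 2)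
  calc 2 ^ (1 - β) * (h * (2 * A + h)) ^ β
      ≤ 2 ^ (1 - β) * (h ^ β * ((2 * A) ^ β + h ^ β)) := by
        rw [mul_rpow hh (by positivity)]
        gcongr
        exact rpow_add_le_add_rpow (by positivity) hh hβ0 hβ1
    _ = (2 ^ (1 - β) * 2 ^ β) * A ^ β * h ^ β + 2 ^ (1 - β) * h ^ β * h ^ β := by
        rw [mul_rpow zero_le_two hA]
        ring
    _ ≤ 2 * (A ^ β + h ^ β) * h ^ β := by
        rw [htwo]
        have : 0 ≤ h ^ β * h ^ β := by positivity
        nlinarith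

end Real

section HolderPower

variable {E : Type*} [NormedAddCommGroup E] [InnerProductSpace ℝ E] {β : ℝ}

lemma norm_rpow_smul_self (hβ : 0 < β) (x : E) : ‖‖x‖ ^ (β - 1) • x‖ = ‖x‖ ^ β := by
  rw [norm_smul, Real.norm_of_nonneg (by positivity),
    ← Real.rpow_eq_rpow_sub_one_mul (norm_nonneg x) hβ.ne']

theorem norm_rpow_smul_self_sub_le (hβ0 : 0 < β) (hβ1 : β ≤ 1) (x y : E) :
    ‖‖x‖ ^ (β - 1) • x - ‖y‖ ^ (β - 1) • y‖ ≤ 2 ^ (1 - β) * ‖x - y‖ ^ β := by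
  have hC : (1 : ℝ) ≤ 2 ^ (1 - β) := Real.one_le_rpow one_le_two (by linarith)
  rcases eq_or_ne x 0 with rfl | hx
  · simpa [norm_rpow_smul_self hβ0] using le_mul_of_one_le_left (by positivity) hC
  rcases eq_or_ne y 0 with rfl | hy
  · simpa [norm_rpow_smul_self hβ0] using le_mul_of_one_le_left (by positivity) hC
  have hr : 0 < ‖x‖ := norm_pos_iff.2 hx
  have hρ : 0 < ‖y‖ := norm_pos_iff.2 hy
  have hc := abs_le.1 (abs_real_inner_le_norm x y)
  -- `l` is the weight with `inner ℝ x y = (2 * l - 1) * ‖x‖ * ‖y‖`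
  set l := (‖x‖ * ‖y‖ + inner ℝ x y) / (2 * (‖x‖ * ‖y‖)) with hl
  have hl0 : 0 ≤ l := div_nonneg (by linarith) (by positivity)
  have hl1 : l ≤ 1 := (div_le_one (by positivity)).2 (by linarith)
  have hlhs : ‖‖x‖ ^ (β - 1) • x - ‖y‖ ^ (β - 1) • y‖ ^ 2
      = l * (‖x‖ ^ β - ‖y‖ ^ β) ^ 2 + (1 - l) * (‖x‖ ^ β + ‖y‖ ^ β) ^ 2 := by
    rw [norm_sub_sq_real, norm_rpow_smul_self hβ0, norm_rpow_smul_self hβ0, real_inner_smul_left,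
      real_inner_smul_right, Real.rpow_eq_rpow_sub_one_mul hr.le hβ0.ne',
      Real.rpow_eq_rpow_sub_one_mul hρ.le hβ0.ne', hl]
    field_simp
    ring
  have hrhs : ‖x - y‖ ^ 2 = l * (‖x‖ - ‖y‖) ^ 2 + (1 - l) * (‖x‖ + ‖y‖) ^ 2 := by
    rw [norm_sub_sq_real, hl]
    field_simp
    ring
  rw [← pow_le_pow_iff_left₀ (norm_nonneg _) (by positivity) two_ne_zero, hlhs, mul_pow,
    Real.rpow_pow_comm (norm_nonneg _), hrhs]
  exact Real.interpolate_sq_rpow_le hr.le hρ.le hβ0.le hβ1 hl0 hl1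

end HolderPower

lemma norm_sq_sub_sq_le {R : Type*} [NormedCommRing R] (w a : R) :
    ‖w ^ 2 - a ^ 2‖ ≤ ‖w - a‖ * (2 * ‖a‖ + ‖w - a‖) := calc
  ‖w ^ 2 - a ^ 2‖ = ‖(w - a) * ((a + a) + (w - a))‖ := by ring_nf
  _ ≤ ‖w - a‖ * (‖a + a‖ + ‖w - a‖) := by
    refine (norm_mul_le _ _).trans ?_
    gcongr
    exact norm_add_le _ _
  _ ≤ ‖w - a‖ * (2 * ‖a‖ + ‖w - a‖) := by
    gcongr
    exact (norm_add_le a a).trans_eq (two_mul _).symm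

theorem stmt8 (a b : ℂ) (q : ℝ) (hq1 : 2 < q) (hq2 : q < 4) (t : ℝ) (ht0 : 0 ≤ t) (ht1 : t ≤ 1) :
    norm
        (((‖a + (t : ℂ) * (b - a)‖ ^ (q - 4) : ℝ) : ℂ)
            * (starRingEnd ℂ) ((a + (t : ℂ) * (b - a)) ^ 2)
          - ((‖a‖ ^ (q - 4) : ℝ) : ℂ) * (starRingEnd ℂ) (a ^ 2))
      ≤ 2 * (‖a‖ ^ (q / 2 - 1) + ‖b - a‖ ^ (q / 2 - 1))
          * ‖b - a‖ ^ (q / 2 - 1) := by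
  set β := q / 2 - 1 with hβ
  have hβ0 : 0 < β := by linarith
  have hβ1 : β ≤ 1 := by linarith
  set w := a + (t : ℂ) * (b - a)
  have hconj (u : ℂ) : ((‖u‖ ^ (q - 4) : ℝ) : ℂ) * (starRingEnd ℂ) (u ^ 2)
      = (starRingEnd ℂ) (‖u ^ 2‖ ^ (β - 1) • u ^ 2) := by
    rw [Complex.real_smul, map_mul, Complex.conj_ofReal, norm_pow,
      ← Real.rpow_natCast_mul (norm_nonneg u)]
    congr 3
    push_cast
    ring
  have hw : ‖w - a‖ ≤ ‖b - a‖ := by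
    rw [add_sub_cancel_left, norm_mul, Complex.norm_real, Real.norm_of_nonneg ht0]
    exact mul_le_of_le_one_left (norm_nonneg _) ht1
  rw [hconj, hconj, ← map_sub, Complex.norm_conj]
  calc _ ≤ 2 ^ (1 - β) * ‖w ^ 2 - a ^ 2‖ ^ β :=
        norm_rpow_smul_self_sub_le hβ0 hβ1 _ _
    _ ≤ 2 ^ (1 - β) * (‖b - a‖ * (2 * ‖a‖ + ‖b - a‖)) ^ β := by
        gcongr
        exact (norm_sq_sub_sq_le w a).trans (by gcongr)
    _ ≤ _ := Real.two_rpow_one_sub_mul_rpow_le (norm_nonneg _) (norm_nonneg _) hβ0.le hβ1
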